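/- Let k ≥ 4 be an even integer and let C be the cycle graph on {1,…,k} with edges {r,r+1} (1 ≤ r ≤ k−1) and {1,k}. Then P_C = I_{C̄}: the ideal P_C equals the kernel of the K-algebra homomorphism from S to K[t_{p_1},…,t_{p_k},t_{q_1},…,t_{q_k}] sending x_{r,r+1} ↦ t_{p_r}t_{p_{r+1}} and x_{r+1,r} ↦ t_{q_r}t_{q_{r+1}} for 1 ≤ r ≤ k−1, x_{1k} ↦ t_{p_1}t_{q_k}, x_{k1} ↦ t_{p_k}t_{q_1}, and x_{rr} ↦ t_{p_r}t_{q_r} for 1 ≤ r ≤ k; that is, P_C is the toric ideal of the Möbius-band graph C̄ under this variable–edge identification. -/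

import Mathlib

open MvPolynomial

/-- The cycle graph on `{1,…,k}` (here `Fin k`, with `r : Fin k` standing for the vertex
`r+1`): edges `{r, r+1}` for `1 ≤ r ≤ k-1` and `{1, k}`. -/
def cycleGraph' (k : ℕ) : SimpleGraph (Fin k) where
  Adj i j := i ≠ j ∧ ((i.val + 1) % k = j.val ∨ (j.val + 1) % k = i.val)
  symm := by
    constructor
    rintro i j ⟨hne, h⟩
    exact ⟨hne.symm, h.symm⟩
  loopless := by
    constructor
    rintro i ⟨hne, -⟩
    exact hne rfl

instance (k : ℕ) : DecidableRel (cycleGraph' k).Adj := fun i j =>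
  inferInstanceAs (Decidable (i ≠ j ∧ ((i.val + 1) % k = j.val ∨ (j.val + 1) % k = i.val)))

/-- The set of variables of `S`: one variable `x_{ii}` for each vertex `i` of `G` and two
variables `x_{ij}`, `x_{ji}` for each edge `{i,j}` of `G`. -/
abbrev VarSet (k : ℕ) (G : SimpleGraph (Fin k)) : Type :=
  {p : Fin k × Fin k // p.1 = p.2 ∨ G.Adj p.1 p.2}

/-- The diagonal 2-minor `f_{ij} = x_{ii} x_{jj} - x_{ij} x_{ji}`. -/
noncomputable def fij (K : Type) [Field K] {k : ℕ} {G : SimpleGraph (Fin k)}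
    {i j : Fin k} (h : G.Adj i j) : MvPolynomial (VarSet k G) K :=
  X ⟨(i, i), Or.inl rfl⟩ * X ⟨(j, j), Or.inl rfl⟩ -
    X ⟨(i, j), Or.inr h⟩ * X ⟨(j, i), Or.inr h.symm⟩

/-- The ideal `P_G` generated by the diagonal 2-minors `f_{ij}` for edges `{i,j}`, `i < j`. -/
noncomputable def PG (K : Type) [Field K] (k : ℕ) (G : SimpleGraph (Fin k)) :
    Ideal (MvPolynomial (VarSet k G) K) :=
  Ideal.span {f | ∃ i j : Fin k, ∃ h : G.Adj i j, i < j ∧ f = fij K h}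

/-- The `K`-algebra homomorphism from `S` to `K[t_{p_1},…,t_{p_k},t_{q_1},…,t_{q_k}]`
(with `t_{p_r} = X (Sum.inl r)`, `t_{q_r} = X (Sum.inr r)`) sending
`x_{r,r+1} ↦ t_{p_r}t_{p_{r+1}}` and `x_{r+1,r} ↦ t_{q_r}t_{q_{r+1}}` for `1 ≤ r ≤ k−1`,
`x_{1k} ↦ t_{p_1}t_{q_k}`, `x_{k1} ↦ t_{p_k}t_{q_1}`, and `x_{rr} ↦ t_{p_r}t_{q_r}`; its
kernel is the toric ideal of the Möbius-band graph `C̄`. -/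
noncomputable def moebiusMap (K : Type) [Field K] (k : ℕ) :
    MvPolynomial (VarSet k (cycleGraph' k)) K →ₐ[K] MvPolynomial (Fin k ⊕ Fin k) K :=
  aeval fun v =>
    if v.1.1 = v.1.2 then X (Sum.inl v.1.1) * X (Sum.inr v.1.1)
    else if v.1.1.val + 1 = v.1.2.val then X (Sum.inl v.1.1) * X (Sum.inl v.1.2)
    else if v.1.2.val + 1 = v.1.1.val then X (Sum.inr v.1.2) * X (Sum.inr v.1.1)
    else X (Sum.inl v.1.1) * X (Sum.inr v.1.2)

/-!
Modulo `P_C`, the relation `x_{r,r+1} x_{r+1,r} ≡ x_{rr} x_{r+1,r+1}` rewrites every monomial into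
a standard one, in which no edge of `C` carries both `x_{r,r+1}` and `x_{r+1,r}`; each step lowers
the number of factors `x_{r,r+1}`. Since `P_C` lies in the kernel, it remains to see that distinct
standard monomials have distinct images. For a standard monomial the difference `c_r` of the
exponents of `x_{r,r+1}` and `x_{r+1,r}` determines both of them, and the exponents of `p_t` and
`q_t` in its image differ by `c_t + c_{t-1}`, or by `c_t - c_{t-1}` across the twist of the band.
So for two standard monomials with the same image the differences `d` of their `c` satisfy
`d_t = -d_{t-1}` all around the cycle except at the twist, where `d_t = d_{t-1}`; as `k` is even
this forces `d = 0`, and the exponents of the `x_{rr}` are then read off.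
-/

theorem LinearMap.ker_eq_of_sup_span_eq_top {R M N ι : Type*} [Ring R] [AddCommGroup M]
    [Module R M] [AddCommGroup N] [Module R N] (f : M →ₗ[R] N) {I : Submodule R M}
    (hI : I ≤ LinearMap.ker f) {v : ι → M} (hspan : I ⊔ Submodule.span R (Set.range v) = ⊤)
    (hv : LinearIndependent R (f ∘ v)) : LinearMap.ker f = I := by
  refine le_antisymm (fun x hx => ?_) hI
  obtain ⟨y, hy, z, hz, rfl⟩ := Submodule.mem_sup.mp (hspan ▸ Submodule.mem_top : x ∈ _)
  obtain ⟨c, rfl⟩ := Finsupp.mem_span_range_iff_exists_finsupp.mp hz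
  have hfz : Finsupp.linearCombination R (f ∘ v) c = 0 := by
    rw [LinearMap.mem_ker, map_add, LinearMap.mem_ker.mp (hI hy), zero_add] at hx
    rw [Finsupp.linearCombination_apply, ← hx, map_finsuppSum]
    simp [Finsupp.sum]
  rw [linearIndependent_iff.mp hv c hfz, Finsupp.sum_zero_index, add_zero]
  exact hy

theorem MvPolynomial.ker_eq_of_monomial_mem_sup_span {σ R A : Type*} [CommRing R] [CommRing A]
    [Algebra R A] (φ : MvPolynomial σ R →ₐ[R] A) {I : Ideal (MvPolynomial σ R)}
    (hI : I ≤ RingHom.ker φ.toRingHom) {P : (σ →₀ ℕ) → Prop}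
    (hspan : ∀ μ, monomial μ (1 : R) ∈
      I.restrictScalars R ⊔ Submodule.span R (Set.range fun μ : Subtype P => monomial μ.1 1))
    (hP : LinearIndependent R fun μ : Subtype P => φ (monomial μ.1 1)) :
    RingHom.ker φ.toRingHom = I := by
  have htop : I.restrictScalars R ⊔
      Submodule.span R (Set.range fun μ : Subtype P => monomial μ.1 (1 : R)) = ⊤ := by
    refine eq_top_iff.mpr ?_
    rw [← (basisMonomials σ R).span_eq, coe_basisMonomials, Submodule.span_le]
    rintro _ ⟨μ, rfl⟩
    exact hspan μ
  have h := LinearMap.ker_eq_of_sup_span_eq_top φ.toLinearMap hI htop hP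
  ext x
  exact SetLike.ext_iff.mp h x

open Finsupp in
theorem MvPolynomial.algHom_monomial_of_X {σ τ R : Type*} [CommSemiring R]
    {φ : MvPolynomial σ R →ₐ[R] MvPolynomial τ R} {e : σ → τ →₀ ℕ}
    (hφ : ∀ v, φ (X v) = monomial (e v) 1) (μ : σ →₀ ℕ) :
    φ (monomial μ 1) = monomial (linearCombination ℕ e μ) 1 := by
  rw [show φ = aeval fun v => monomial (e v) 1 from algHom_ext fun v => by rw [hφ, aeval_X],
    aeval_monomial, linearCombination_apply, monomial_finsupp_sum_index, map_one, one_mul, C_1,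
    one_mul]
  exact Finsupp.prod_congr fun v _ => by rw [monomial_pow, one_pow]

theorem MvPolynomial.X_mul_X_eq_monomial {σ R : Type*} [CommSemiring R] (a b : σ) :
    (X a * X b : MvPolynomial σ R) = monomial (Finsupp.single a 1 + Finsupp.single b 1) 1 := by
  rw [X, X, monomial_mul, mul_one]

theorem fij_symm (K : Type) [Field K] {k : ℕ} {G : SimpleGraph (Fin k)} {i j : Fin k}
    (h : G.Adj i j) : fij K h = fij K h.symm := by
  simp only [fij]
  ring

theorem fij_mem_PG (K : Type) [Field K] {k : ℕ} {G : SimpleGraph (Fin k)} {i j : Fin k}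
    (h : G.Adj i j) : fij K h ∈ PG K k G := by
  rcases lt_or_gt_of_ne h.ne with hij | hji
  · exact Ideal.subset_span ⟨i, j, h, hij, rfl⟩
  · exact fij_symm K h ▸ Ideal.subset_span ⟨j, i, h.symm, hji, rfl⟩

namespace Fin

variable {k : ℕ} [NeZero k]

theorem val_add_one_eq_ite (r : Fin k) :
    (r + 1).val = if r.val + 1 = k then 0 else r.val + 1 := by
  rw [val_add, val_one', Nat.add_mod_mod]
  split_ifs with h
  · rw [h, Nat.mod_self]
  · exact Nat.mod_eq_of_lt (by omega)

theorem eq_zero_of_apply_add_one_eq (hk : Even k) {u : Fin k → ℤ}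
    (hu : ∀ t, u (t + 1) = if t + 1 = 0 then u t else -u t) : u = 0 := by
  have hpos : 0 < k := Nat.pos_of_ne_zero (NeZero.ne k)
  have hsucc : ∀ n (h : n + 1 < k), (⟨n + 1, h⟩ : Fin k) = ⟨n, by omega⟩ + 1 :=
    fun n h => Fin.ext (by rw [val_add_one_eq_ite]; simp [h.ne])
  have alt : ∀ n (h : n < k), u ⟨n, h⟩ = (-1) ^ n * u 0 := by
    intro n
    induction n with
    | zero => intro h; simp
    | succ n ih =>
      intro h
      have hne : (⟨n, by omega⟩ + 1 : Fin k) ≠ 0 := by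
        rw [← hsucc n h]; exact Fin.ne_of_val_ne (by simp)
      rw [hsucc n h, hu, if_neg hne, ih, pow_succ]
      ring
  have hwrap : (⟨k - 1, by omega⟩ + 1 : Fin k) = 0 :=
    Fin.ext (by rw [val_add_one_eq_ite, if_pos (by simp; omega)]; rfl)
  have hu0 : u 0 = 0 := by
    have h := hu ⟨k - 1, by omega⟩
    rw [hwrap, if_pos rfl, alt (k - 1), (Nat.Even.sub_odd hpos hk odd_one).neg_one_pow] at h
    omega
  funext t
  simpa [hu0] using alt t t.isLt

theorem val_add_one_eq_iff (r : Fin k) : r.val + 1 = (r + 1).val ↔ r + 1 ≠ 0 := by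
  rw [val_add_one_eq_ite, ne_eq, Fin.ext_iff, val_add_one_eq_ite, val_zero]
  split_ifs <;> simp_all

theorem add_one_ne_self (hk : 2 ≤ k) (r : Fin k) : r + 1 ≠ r := by
  rw [ne_eq, Fin.ext_iff, val_add_one_eq_ite]
  split_ifs <;> omega

theorem val_add_one_add_one_ne (hk : 3 ≤ k) (r : Fin k) : (r + 1).val + 1 ≠ r.val := by
  rw [val_add_one_eq_ite]
  split_ifs <;> omega

theorem add_one_add_one_ne_self (hk : 3 ≤ k) (r : Fin k) : r + 1 + 1 ≠ r := by
  rw [ne_eq, Fin.ext_iff, val_add_one_eq_ite, val_add_one_eq_ite r]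
  split_ifs <;> omega

end Fin

theorem cycleGraph'_adj_iff {k : ℕ} [NeZero k] {i j : Fin k} :
    (cycleGraph' k).Adj i j ↔ i ≠ j ∧ (i + 1 = j ∨ j + 1 = i) := by
  simp only [cycleGraph', Fin.ext_iff, Fin.val_add, Fin.val_one', Nat.add_mod_mod]

abbrev CycleVar (k : ℕ) : Type := VarSet k (cycleGraph' k)

namespace CycleVar

open MvPolynomial Finsupp

variable {k : ℕ} [NeZero k] [Fact (3 ≤ k)]

theorem adj_add_one (r : Fin k) : (cycleGraph' k).Adj r (r + 1) := by
  have hk : 3 ≤ k := Fact.out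
  exact cycleGraph'_adj_iff.mpr ⟨(Fin.add_one_ne_self (by omega) r).symm, Or.inl rfl⟩

def diag (r : Fin k) : CycleVar k := ⟨(r, r), Or.inl rfl⟩

def fwd (r : Fin k) : CycleVar k := ⟨(r, r + 1), Or.inr (adj_add_one r)⟩

def bwd (r : Fin k) : CycleVar k := ⟨(r + 1, r), Or.inr (adj_add_one r).symm⟩

def equivSum : Fin k ⊕ Fin k ⊕ Fin k ≃ CycleVar k where
  toFun := Sum.elim diag (Sum.elim fwd bwd)
  invFun v :=
    if v.1.1 = v.1.2 then .inl v.1.1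
    else if v.1.1 + 1 = v.1.2 then .inr (.inl v.1.1) else .inr (.inr v.1.2)
  left_inv := by
    have hk : 3 ≤ k := Fact.out
    have h1 (r : Fin k) := Fin.add_one_ne_self (by omega) r
    have h2 (r : Fin k) := Fin.add_one_add_one_ne_self hk r
    rintro (r | r | r) <;> simp [diag, fwd, bwd, h1, (h1 _).symm, h2]
  right_inv := by
    rintro ⟨⟨i, j⟩, h⟩
    dsimp only
    split_ifs with hij hij'
    · subst hij; rfl
    · subst hij'; rfl
    · obtain rfl : j + 1 = i :=
        (cycleGraph'_adj_iff.mp (h.resolve_left hij)).2.resolve_left hij'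
      rfl

theorem sum_univ_eq {M : Type*} [AddCommMonoid M] (F : CycleVar k → M) :
    ∑ v, F v = ∑ r, F (diag r) + ∑ r, F (fwd r) + ∑ r, F (bwd r) := by
  rw [← equivSum.sum_comp, Fintype.sum_sum_type, Fintype.sum_sum_type, add_assoc]
  rfl

theorem forall_iff {P : CycleVar k → Prop} :
    (∀ v, P v) ↔ (∀ r, P (diag r)) ∧ (∀ r, P (fwd r)) ∧ ∀ r, P (bwd r) := by
  rw [← equivSum.forall_congr_right, Sum.forall, Sum.forall]
  rfl

@[simp] theorem equivSum_symm_diag (r : Fin k) : equivSum.symm (diag r) = .inl r :=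
  equivSum.symm_apply_apply (.inl r)

@[simp] theorem equivSum_symm_fwd (r : Fin k) : equivSum.symm (fwd r) = .inr (.inl r) :=
  equivSum.symm_apply_apply (.inr (.inl r))

@[simp] theorem equivSum_symm_bwd (r : Fin k) : equivSum.symm (bwd r) = .inr (.inr r) :=
  equivSum.symm_apply_apply (.inr (.inr r))

/-- The edge of the Möbius band `C̄` carrying a variable, as the exponent vector of its two
endpoints (`Sum.inl r` is `p_{r+1}`, `Sum.inr r` is `q_{r+1}`): the rungs `x_{rr}` join `p_r` and
`q_r`, the other variables run along the two sides, which are swapped where the cycle closes. -/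
noncomputable def edge (v : CycleVar k) : Fin k ⊕ Fin k →₀ ℕ :=
  Sum.elim (fun r => single (.inl r) 1 + single (.inr r) 1)
    (Sum.elim
      (fun r => single (.inl r) 1 +
        if r + 1 = 0 then single (.inr (r + 1)) 1 else single (.inl (r + 1)) 1)
      (fun r => single (.inr r) 1 +
        if r + 1 = 0 then single (.inl (r + 1)) 1 else single (.inr (r + 1)) 1))
    (equivSum.symm v)

theorem moebiusMap_X (K : Type) [Field K] (v : CycleVar k) :
    moebiusMap K k (X v) = monomial (edge v) 1 := by
  have hk : 3 ≤ k := Fact.out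
  have hne (r : Fin k) : r + 1 ≠ r := Fin.add_one_ne_self (by omega) r
  revert v
  refine forall_iff.mpr ⟨fun r => ?_, fun r => ?_, fun r => ?_⟩ <;>
    simp only [edge, equivSum_symm_diag, equivSum_symm_fwd, equivSum_symm_bwd, Sum.elim_inl,
      Sum.elim_inr] <;>
    simp only [moebiusMap, aeval_X, diag, fwd, bwd, Fin.val_add_one_eq_iff, if_true, hne,
      (hne r).symm, Fin.val_add_one_add_one_ne hk, if_false, X_mul_X_eq_monomial]
  · by_cases h : r + 1 = 0 <;> simp [h]
  · by_cases h : r + 1 = 0 <;> simp [h, add_comm]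

theorem moebiusMap_monomial (K : Type) [Field K] (μ : CycleVar k →₀ ℕ) :
    moebiusMap K k (monomial μ 1) = monomial (linearCombination ℕ edge μ) 1 :=
  algHom_monomial_of_X (moebiusMap_X K) μ

theorem edge_diag_add_edge_diag (r : Fin k) :
    edge (diag r) + edge (diag (r + 1)) = edge (fwd r) + edge (bwd r) := by
  by_cases h : r + 1 = 0 <;> simp [edge, h] <;> abel

theorem moebiusMap_fij (K : Type) [Field K] (r : Fin k) :
    moebiusMap K k (fij K (adj_add_one r)) = 0 := by
  change moebiusMap K k (X (diag r) * X (diag (r + 1)) - X (fwd r) * X (bwd r)) = 0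
  rw [map_sub, map_mul, map_mul, moebiusMap_X, moebiusMap_X, moebiusMap_X, moebiusMap_X,
    monomial_mul, monomial_mul, edge_diag_add_edge_diag, sub_self]

theorem PG_le_ker (K : Type) [Field K] :
    PG K k (cycleGraph' k) ≤ RingHom.ker (moebiusMap K k).toRingHom := by
  refine Ideal.span_le.mpr ?_
  rintro _ ⟨i, j, h, -, rfl⟩
  rcases (cycleGraph'_adj_iff.mp h).2 with rfl | rfl
  · exact moebiusMap_fij K i
  · rw [SetLike.mem_coe, fij_symm]
    exact moebiusMap_fij K j

/-- Exponents of the standard monomials for the leading terms `x_{r,r+1} x_{r+1,r}` of the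
generators `f_{r,r+1}`. -/
def IsStandard (μ : CycleVar k →₀ ℕ) : Prop := ∀ r, μ (fwd r) = 0 ∨ μ (bwd r) = 0

theorem fwd_ne_bwd (r : Fin k) : fwd r ≠ bwd r := fun h => by
  simpa using congrArg equivSum.symm h

theorem monomial_mem_sup_span_standard (K : Type) [Field K] (μ : CycleVar k →₀ ℕ) :
    monomial μ (1 : K) ∈ (PG K k (cycleGraph' k)).restrictScalars K ⊔
      Submodule.span K (Set.range fun μ : Subtype IsStandard => monomial μ.1 1) := by
  -- `w` counts the factors `x_{r,r+1}`
  let w : CycleVar k → ℕ := fun v => Sum.elim 0 (Sum.elim 1 0) (equivSum.symm v)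
  induction hn : weight w μ using Nat.strong_induction_on generalizing μ with
  | _ n ih =>
  by_cases hμ : IsStandard μ
  · exact Submodule.mem_sup_right (Submodule.subset_span ⟨⟨μ, hμ⟩, rfl⟩)
  obtain ⟨r, hf, hb⟩ : ∃ r, μ (fwd r) ≠ 0 ∧ μ (bwd r) ≠ 0 := by
    simpa [IsStandard, not_or] using hμ
  have hle : single (fwd r) 1 + single (bwd r) 1 ≤ μ := fun v => by
    simp only [Finsupp.add_apply, single_apply]
    split_ifs with h1 h2 h2
    · exact absurd (h1.trans h2.symm) (fwd_ne_bwd r)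
    all_goals subst_vars; omega
  obtain ⟨ν, rfl⟩ : ∃ ν, μ = ν + (single (fwd r) 1 + single (bwd r) 1) :=
    ⟨_, (tsub_add_cancel_of_le hle).symm⟩
  have hrw : monomial (ν + (single (fwd r) 1 + single (bwd r) 1)) (1 : K) =
      monomial (ν + (single (diag r) 1 + single (diag (r + 1)) 1)) 1 -
        monomial ν 1 * fij K (adj_add_one r) := by
    have hsplit (a b : CycleVar k) : monomial (ν + (single a 1 + single b 1)) (1 : K) =
        monomial ν 1 * (X a * X b) := by
      rw [X_mul_X_eq_monomial, monomial_mul, one_mul]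
    rw [hsplit, hsplit]
    change _ = _ - _ * (X (diag r) * X (diag (r + 1)) - X (fwd r) * X (bwd r))
    ring
  rw [hrw]
  refine Submodule.sub_mem _ (ih _ ?_ _ rfl)
    (Submodule.mem_sup_left (Ideal.mul_mem_left _ _ (fij_mem_PG K _)))
  simp [← hn, w, weight_single]

theorem linearCombination_edge_inl (μ : CycleVar k →₀ ℕ) (t : Fin k) :
    linearCombination ℕ edge μ (.inl (t + 1)) =
      μ (diag (t + 1)) + μ (fwd (t + 1)) + if t + 1 = 0 then μ (bwd t) else μ (fwd t) := by
  rw [linearCombination_apply, Finsupp.sum_fintype _ _ (by simp), Finsupp.finsetSum_apply,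
    sum_univ_eq]
  simp [edge, single_apply, apply_ite (fun f : Fin k ⊕ Fin k →₀ ℕ => f (.inl (t + 1))),
    Finset.sum_add_distrib]
  rw [Fintype.sum_eq_single t fun x hx => by simp [hx],
    Fintype.sum_eq_single t fun x hx => by simp [hx], if_pos rfl, if_pos rfl]
  split_ifs <;> ring

theorem linearCombination_edge_inr (μ : CycleVar k →₀ ℕ) (t : Fin k) :
    linearCombination ℕ edge μ (.inr (t + 1)) =
      μ (diag (t + 1)) + μ (bwd (t + 1)) + if t + 1 = 0 then μ (fwd t) else μ (bwd t) := by
  rw [linearCombination_apply, Finsupp.sum_fintype _ _ (by simp), Finsupp.finsetSum_apply,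
    sum_univ_eq]
  simp [edge, single_apply, apply_ite (fun f : Fin k ⊕ Fin k →₀ ℕ => f (.inr (t + 1))),
    Finset.sum_add_distrib]
  rw [Fintype.sum_eq_single t fun x hx => by simp [hx],
    Fintype.sum_eq_single t fun x hx => by simp [hx], if_pos rfl, if_pos rfl]
  split_ifs <;> ring

theorem eq_of_linearCombination_edge_eq (hk : Even k) {μ μ' : CycleVar k →₀ ℕ}
    (hμ : IsStandard μ) (hμ' : IsStandard μ')
    (h : linearCombination ℕ edge μ = linearCombination ℕ edge μ') : μ = μ' := by
  have hp (t : Fin k) := DFunLike.congr_fun h (.inl (t + 1))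
  have hq (t : Fin k) := DFunLike.congr_fun h (.inr (t + 1))
  simp only [linearCombination_edge_inl, linearCombination_edge_inr] at hp hq
  let u (r : Fin k) : ℤ := (μ (fwd r) - μ (bwd r) : ℤ) - (μ' (fwd r) - μ' (bwd r) : ℤ)
  -- the `p`- and `q`-degrees at `t + 1` give `u (t + 1) = -u t`, except across the twist
  have hu : u = 0 := Fin.eq_zero_of_apply_add_one_eq hk fun t => by
    have hpt := hp t
    have hqt := hq t
    simp only [u]
    split_ifs at hpt hqt ⊢ <;> omega
  have hfb (r : Fin k) : μ (fwd r) = μ' (fwd r) ∧ μ (bwd r) = μ' (bwd r) := by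
    have hr := congrFun hu r
    have := hμ r
    have := hμ' r
    simp only [u, Pi.zero_apply] at hr
    omega
  refine Finsupp.ext (forall_iff.mpr ⟨fun r => ?_, fun r => (hfb r).1, fun r => (hfb r).2⟩)
  have hr := hp (r - 1)
  rw [sub_add_cancel] at hr
  have := hfb r
  have := hfb (r - 1)
  split_ifs at hr <;> omega

theorem linearIndependent_moebiusMap_standard (K : Type) [Field K] (hk : Even k) :
    LinearIndependent K fun μ : Subtype IsStandard => moebiusMap K k (monomial μ.1 1) := by
  have himage : (fun μ : Subtype IsStandard => moebiusMap K k (monomial μ.1 1)) =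
      basisMonomials _ K ∘ fun μ => linearCombination ℕ edge μ.1 :=
    funext fun μ => by rw [Function.comp_apply, coe_basisMonomials, moebiusMap_monomial]
  rw [himage]
  exact (basisMonomials _ K).linearIndependent.comp _
    fun μ ν h => Subtype.ext (eq_of_linearCombination_edge_eq hk μ.2 ν.2 h)

theorem ker_moebiusMap (K : Type) [Field K] (hk : Even k) :
    RingHom.ker (moebiusMap K k).toRingHom = PG K k (cycleGraph' k) :=
  ker_eq_of_monomial_mem_sup_span _ (PG_le_ker K) (monomial_mem_sup_span_standard K)
    (linearIndependent_moebiusMap_standard K hk)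

end CycleVar

/-- For an even cycle `C` of length `k ≥ 4`, the ideal `P_C` equals the toric
ideal `I_{C̄}` of the Möbius-band graph `C̄`, i.e. the kernel of the homomorphism above. -/
theorem PG_cycle_eq_toric_moebius (K : Type) [Field K] (k : ℕ) (hk : 4 ≤ k) (hke : Even k) :
    PG K k (cycleGraph' k) = RingHom.ker (moebiusMap K k).toRingHom := by
  have : NeZero k := ⟨by omega⟩
  have : Fact (3 ≤ k) := ⟨by omega⟩
  exact (CycleVar.ker_moebiusMap K hke).symm
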